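/- Refined upper bounds for reconfigurable networks: let B = (Q, I, Σ, Δ) be a broadcast protocol and F ⊆ Q. If there exists a reconfigurable execution of B covering F, then there exists a reconfigurable execution ρ covering F with size |ρ| ≤ 2|Q| − |I| and with a_ρ(n) ≤ |Q| − |I| for every node n; consequently its length satisfies ‖ρ‖ ≤ (2|Q| − |I|)·(|Q| − |I|). -/

import Mathlib

/-- A broadcast protocol over finite state set `Q` and finite message alphabet `M`.
`I` is the set of initial states, `br q m q'` means `(q, !!m, q') ∈ Δ` (a broadcast
transition) and `rcv q m q'` means `(q, ??m, q') ∈ Δ` (a reception transition).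
The protocol is complete for receptions. -/
structure BroadcastProtocol (Q M : Type) [Fintype Q] [DecidableEq Q] [Fintype M] where
  I : Finset Q
  br : Q → M → Q → Prop
  rcv : Q → M → Q → Prop
  complete : ∀ q m, ∃ q', rcv q m q'

section Execs
variable {Q M : Type} [Fintype Q] [DecidableEq Q] [Fintype M]

/-- A reconfigurable execution of length `r` over the finite node type `ν`:
`lab i v` is the state of node `v` in the `i`-th configuration, `edges i` is the
(symmetric, irreflexive) communication topology of the `i`-th configuration,
and in the `i`-th step node `sender i` broadcasts message `msg i` to its
neighbours; the topology may change arbitrarily at each step. -/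
structure RExec (P : BroadcastProtocol Q M) (ν : Type) [Fintype ν] [DecidableEq ν]
    (r : ℕ) where
  lab : Fin (r + 1) → ν → Q
  edges : Fin (r + 1) → ν → ν → Prop
  edges_symm : ∀ i, Symmetric (edges i)
  edges_irrefl : ∀ i, Irreflexive (edges i)
  sender : Fin r → ν
  msg : Fin r → M
  init : ∀ v, lab 0 v ∈ P.I
  step_br : ∀ i : Fin r, P.br (lab i.castSucc (sender i)) (msg i) (lab i.succ (sender i))
  step_rcv : ∀ i : Fin r, ∀ v, v ≠ sender i →
    (edges i.castSucc (sender i) v → P.rcv (lab i.castSucc v) (msg i) (lab i.succ v)) ∧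
    (¬ edges i.castSucc (sender i) v → lab i.succ v = lab i.castSucc v)

namespace RExec

variable {P : BroadcastProtocol Q M} {ν : Type} [Fintype ν] [DecidableEq ν] {r : ℕ}

/-- Labelling of the last configuration. -/
def lastLab (ρ : RExec P ν r) : ν → Q := ρ.lab (Fin.last r)

/-- The execution covers `F` if a node of the last configuration is labelled in `F`. -/
def Covers (ρ : RExec P ν r) (F : Set Q) : Prop := ∃ v, ρ.lastLab v ∈ F

/-- The active length of node `v`: the number of steps in which `v` broadcasts. -/
def activeLen (ρ : RExec P ν r) (v : ν) : ℕ :=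
  (Finset.univ.filter fun i : Fin r => ρ.sender i = v).card

end RExec

end Execs

/-!
The coverable states are computed by a saturation starting from `I`, which stabilises after at
most `|Q| - |I|` rounds since every round that changes it adds a state. For each state first
reached in round `ℓ > 0` fix the transition producing it from a state of level `< ℓ` and, when it
is a reception of `m`, a state of level `< ℓ` broadcasting `m`. One main node and one helper per
non-initial state entered by a reception then suffice: in round `ℓ` every node heading for a state
of level `ℓ` takes the fixed transition, receivers listening to the helper of their target state,
which broadcasts once in that round and then stays put. As the topology may be chosen freely at
each step, every node broadcasts at most once per round.
-/

theorem Set.iterate_subset_iterate_natCard_sub {α : Type*} [Finite α] {F : Set α → Set α}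
    (hF : ∀ s, s ⊆ F s) (s : Set α) (n : ℕ) :
    F^[n] s ⊆ F^[Nat.card α - s.ncard] s := by
  set N := Nat.card α - s.ncard
  have mono : Monotone fun k => F^[k] s :=
    monotone_nat_of_le_succ fun k => by
      simpa only [Function.iterate_succ_apply'] using hF (F^[k] s)
  obtain ⟨k, hkN, hfix⟩ : ∃ k ≤ N, F^[k + 1] s = F^[k] s := by
    by_contra! hne
    have grow : ∀ k ≤ N + 1, s.ncard + k ≤ (F^[k] s).ncard := by
      intro k
      induction k with
      | zero => simp
      | succ k ih =>
        intro hk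
        have : (F^[k] s).ncard < (F^[k + 1] s).ncard :=
          Set.ncard_lt_ncard ((mono k.le_succ).lt_of_ne (hne k (by omega)).symm)
        have := ih (by omega)
        omega
    have := grow (N + 1) le_rfl
    have := Set.ncard_le_card (F^[N + 1] s)
    have := Set.ncard_le_card s
    omega
  have stable : F^[n + k] s = F^[k] s := by
    rw [Function.iterate_add_apply]
    rw [Function.iterate_succ_apply'] at hfix
    exact Function.iterate_fixed hfix n
  calc F^[n] s ⊆ F^[n + k] s := mono (Nat.le_add_right n k)
    _ = F^[k] s := stable
    _ ⊆ F^[N] s := mono hkN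

namespace BroadcastProtocol

variable {Q M : Type} [Fintype Q] [DecidableEq Q] [Fintype M] (P : BroadcastProtocol Q M)

def post (C : Set Q) : Set Q :=
  C ∪ {q | ∃ p ∈ C, ∃ m, P.br p m q} ∪ {q | ∃ p ∈ C, ∃ m, P.rcv p m q ∧ ∃ p' ∈ C, ∃ z, P.br p' m z}

def covLevel (n : ℕ) : Set Q := P.post^[n] P.I

lemma subset_post (C : Set Q) : C ⊆ P.post C := fun _ h => Or.inl (Or.inl h)

lemma covLevel_succ (n : ℕ) : P.covLevel (n + 1) = P.post (P.covLevel n) :=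
  Function.iterate_succ_apply' _ _ _

lemma covLevel_subset_covLevel_card_sub (n : ℕ) :
    P.covLevel n ⊆ P.covLevel (Fintype.card Q - P.I.card) := by
  simpa only [covLevel, Nat.card_eq_fintype_card, Set.ncard_coe_finset] using
    Set.iterate_subset_iterate_natCard_sub P.subset_post (P.I : Set Q) n

end BroadcastProtocol

namespace RExec

variable {Q M : Type} [Fintype Q] [DecidableEq Q] [Fintype M] {P : BroadcastProtocol Q M}
  {ν : Type} [Fintype ν] [DecidableEq ν] {r : ℕ}

theorem lab_mem_covLevel (ρ : RExec P ν r) (i : Fin (r + 1)) (v : ν) :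
    ρ.lab i v ∈ P.covLevel i := by
  induction i using Fin.induction generalizing v with
  | zero => exact ρ.init v
  | succ i ih =>
    rw [Fin.val_succ, P.covLevel_succ]
    have hsender : ρ.lab i.succ (ρ.sender i) ∈ P.post (P.covLevel i) :=
      Or.inl (Or.inr ⟨_, ih _, _, ρ.step_br i⟩)
    by_cases hv : v = ρ.sender i
    · exact hv ▸ hsender
    obtain ⟨hrcv, hidle⟩ := ρ.step_rcv i v hv
    by_cases he : ρ.edges i.castSucc (ρ.sender i) v
    · exact Or.inr ⟨_, ih v, _, hrcv he, _, ih _, _, ρ.step_br i⟩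
    · rw [hidle he]
      exact P.subset_post _ (ih v)

end RExec

namespace BroadcastProtocol

variable {Q M : Type} [Fintype Q] [DecidableEq Q] [Fintype M] (P : BroadcastProtocol Q M)

noncomputable def minLevel (q : Q) : ℕ := sInf {n | q ∈ P.covLevel n}

variable {P}

lemma mem_covLevel_minLevel {q : Q} {n : ℕ} (h : q ∈ P.covLevel n) :
    q ∈ P.covLevel (P.minLevel q) :=
  Nat.sInf_mem (s := {n | q ∈ P.covLevel n}) ⟨n, h⟩

lemma minLevel_le {q : Q} {n : ℕ} (h : q ∈ P.covLevel n) : P.minLevel q ≤ n :=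
  Nat.sInf_le h

lemma exists_prem {q : Q} {n : ℕ} (h : q ∈ P.covLevel n) (hpos : 0 < P.minLevel q) :
    ∃ p ∈ P.covLevel (P.minLevel q - 1), (∃ m, P.br p m q) ∨
      (¬ ∃ p ∈ P.covLevel (P.minLevel q - 1), ∃ m, P.br p m q) ∧
        ∃ m, P.rcv p m q ∧ ∃ p' ∈ P.covLevel (P.minLevel q - 1), ∃ z, P.br p' m z := by
  by_cases hbr : ∃ p ∈ P.covLevel (P.minLevel q - 1), ∃ m, P.br p m q
  · obtain ⟨p, hp, hm⟩ := hbr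
    exact ⟨p, hp, Or.inl hm⟩
  have hmem := mem_covLevel_minLevel h
  rw [← Nat.sub_add_cancel hpos, covLevel_succ] at hmem
  rcases hmem with (hold | hbr') | ⟨p, hp, hrcv⟩
  · exact absurd hold
      (Nat.notMem_of_lt_sInf (s := {n | q ∈ P.covLevel n}) (Nat.sub_one_lt hpos.ne'))
  · exact absurd hbr' hbr
  · exact ⟨p, hp, Or.inr ⟨hbr, hrcv⟩⟩

end BroadcastProtocol

/-- A stratification of the covered states into levels: every covered state of positive
level is entered from a covered state `prem q` of lower level, by a broadcast, or, for the
states of `recv`, by a reception of a message that the covered state `emitter q` of lower level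
broadcasts while moving to `emitted q`. -/
structure LevelledCover {Q M : Type} [Fintype Q] [DecidableEq Q] [Fintype M]
    (P : BroadcastProtocol Q M) where
  covered : Set Q
  level : Q → ℕ
  recv : Finset Q
  prem : Q → Q
  emitter : Q → Q
  emitted : Q → Q
  mem_I_of_level_eq_zero : ∀ q ∈ covered, level q = 0 → q ∈ P.I
  prem_mem : ∀ q ∈ covered, 0 < level q → prem q ∈ covered ∧ level (prem q) < level q
  br_prem : ∀ q ∈ covered, 0 < level q → q ∉ recv → ∃ m, P.br (prem q) m q
  recv_subset : ∀ q ∈ recv, q ∈ covered ∧ q ∉ P.I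
  rcv_prem_br_emitter : ∀ q ∈ recv, ∃ m, P.rcv (prem q) m q ∧ P.br (emitter q) m (emitted q)
  emitter_mem : ∀ q ∈ recv, emitter q ∈ covered ∧ level (emitter q) < level q
  emitted_mem : ∀ q ∈ recv, emitted q ∈ covered ∧ level (emitted q) ≤ level q

namespace LevelledCover

variable {Q M : Type} [Fintype Q] [DecidableEq Q] [Fintype M]

open BroadcastProtocol in
theorem exists_covLevel_subset_covered (P : BroadcastProtocol Q M) :
    ∃ δ : LevelledCover P, (∀ n, P.covLevel n ⊆ δ.covered) ∧
      ∀ q ∈ δ.covered, δ.level q ≤ Fintype.card Q - P.I.card := by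
  classical
  set T := Fintype.card Q - P.I.card
  set C := fun q => P.covLevel (P.minLevel q - 1)
  set recv := Finset.univ.filter fun q =>
    q ∈ P.covLevel T ∧ 0 < P.minLevel q ∧ ¬ ∃ p ∈ C q, ∃ m, P.br p m q
  have mem_recv {q : Q} : q ∈ recv ↔
      q ∈ P.covLevel T ∧ 0 < P.minLevel q ∧ ¬ ∃ p ∈ C q, ∃ m, P.br p m q := by
    simp [recv]
  choose! prem hpremC hprem using fun q (hq : q ∈ P.covLevel T) (hpos : 0 < P.minLevel q) =>
    exists_prem hq hpos
  choose! m hrcv emitter hemitterC emitted hbr using fun q (hq : q ∈ recv) =>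
    have ⟨hT, hpos, hnbr⟩ := mem_recv.mp hq
    ((hprem q hT hpos).resolve_left fun ⟨m, h⟩ => hnbr ⟨_, hpremC q hT hpos, m, h⟩).2
  have lower {p q : Q} (hp : p ∈ C q) (hpos : 0 < P.minLevel q) :
      p ∈ P.covLevel T ∧ P.minLevel p < P.minLevel q :=
    ⟨P.covLevel_subset_covLevel_card_sub _ hp, by have := minLevel_le hp; omega⟩
  refine ⟨⟨P.covLevel T, P.minLevel, recv, prem, emitter, emitted, ?_, ?_, ?_, ?_, ?_, ?_, ?_⟩,
    fun n => P.covLevel_subset_covLevel_card_sub n, fun q => minLevel_le⟩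
  · intro q hq h0
    simpa [h0, covLevel] using mem_covLevel_minLevel hq
  · exact fun q hq hpos => lower (hpremC q hq hpos) hpos
  · intro q hq hpos hnr
    exact (hprem q hq hpos).resolve_right fun ⟨hnbr, _⟩ => hnr (mem_recv.mpr ⟨hq, hpos, hnbr⟩)
  · intro q hq
    obtain ⟨hT, hpos, -⟩ := mem_recv.mp hq
    exact ⟨hT, fun hI => absurd (minLevel_le (n := 0) hI) (by omega)⟩
  · exact fun q hq => ⟨m q hq, hrcv q hq, hbr q hq⟩
  · exact fun q hq => lower (hemitterC q hq) (mem_recv.mp hq).2.1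
  · intro q hq
    have hz : emitted q ∈ P.covLevel (P.minLevel q - 1 + 1) := by
      rw [covLevel_succ]
      exact Or.inl (Or.inr ⟨_, hemitterC q hq, _, hbr q hq⟩)
    refine ⟨P.covLevel_subset_covLevel_card_sub _ hz, ?_⟩
    have := minLevel_le hz
    have := (mem_recv.mp hq).2.1
    omega

end LevelledCover

namespace BroadcastProtocol

variable {Q M : Type} [Fintype Q] [DecidableEq Q] [Fintype M] (P : BroadcastProtocol Q M)
  {ν : Type} [Fintype ν] [DecidableEq ν]

def Step (L : ν → Q) (s : ν) (m : M) (L' : ν → Q) : Prop :=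
  P.br (L s) m (L' s) ∧ ∀ v ≠ s, L' v = L v ∨ P.rcv (L v) m (L' v)

def Reaches (L : ν → Q) (c : ν → ℕ) : Prop :=
  ∃ (r : ℕ) (ρ : RExec P ν r), ρ.lastLab = L ∧ ρ.activeLen = c

end BroadcastProtocol

namespace RExec

variable {Q M : Type} [Fintype Q] [DecidableEq Q] [Fintype M] {P : BroadcastProtocol Q M}
  {ν : Type} [Fintype ν] [DecidableEq ν] {r : ℕ}

def idle (L : ν → Q) (hL : ∀ v, L v ∈ P.I) : RExec P ν 0 where
  lab _ := L
  edges _ _ _ := False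
  edges_symm _ _ _ h := h
  edges_irrefl _ _ h := h
  sender := Fin.elim0
  msg := Fin.elim0
  init := hL
  step_br i := i.elim0
  step_rcv i := i.elim0

/-- The sender `s` is linked exactly to the nodes whose state changes. -/
def snoc (ρ : RExec P ν r) {s : ν} {m : M} {L : ν → Q} (h : P.Step ρ.lastLab s m L) :
    RExec P ν (r + 1) :=
  let E : ν → ν → Prop := fun a b =>
    a ≠ b ∧ (a = s ∧ L b ≠ ρ.lastLab b ∨ b = s ∧ L a ≠ ρ.lastLab a)
  have hE : ∀ ⦃a b⦄, E a b → E b a := fun _ _ ⟨hne, h⟩ => ⟨hne.symm, h.symm⟩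
  have hE' : ∀ a, ¬ E a a := fun _ h => h.1 rfl
  { lab := Fin.snoc ρ.lab L
    edges := Fin.snoc (Function.update ρ.edges (Fin.last r) E) E
    edges_symm := Fin.lastCases (by rw [Fin.snoc_last]; exact hE) fun i => by
      rw [Fin.snoc_castSucc]
      rcases eq_or_ne i (Fin.last r) with rfl | hi
      · rw [Function.update_self]; exact hE
      · rw [Function.update_of_ne hi]; exact ρ.edges_symm i
    edges_irrefl := Fin.lastCases (by rw [Fin.snoc_last]; exact hE') fun i => by
      rw [Fin.snoc_castSucc]
      rcases eq_or_ne i (Fin.last r) with rfl | hi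
      · rw [Function.update_self]; exact hE'
      · rw [Function.update_of_ne hi]; exact ρ.edges_irrefl i
    sender := Fin.snoc ρ.sender s
    msg := Fin.snoc ρ.msg m
    init v := by
      rw [← Fin.castSucc_zero, Fin.snoc_castSucc]
      exact ρ.init v
    step_br := Fin.lastCases
      (by simp only [Fin.snoc_last, Fin.succ_last, Fin.snoc_castSucc]; exact h.1)
      fun i => by simpa only [Fin.snoc_castSucc, Fin.succ_castSucc] using ρ.step_br i
    step_rcv := Fin.lastCases
      (fun v hv => by
        simp only [Fin.snoc_last, Fin.succ_last, Fin.snoc_castSucc, Function.update_self] at hv ⊢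
        refine ⟨fun hsv => (h.2 v hv).resolve_left ?_, fun hsv => ?_⟩
        · rcases hsv with ⟨-, ⟨-, hch⟩ | ⟨rfl, -⟩⟩
          exacts [hch, absurd rfl hv]
        · by_contra hch
          exact hsv ⟨Ne.symm hv, Or.inl ⟨rfl, hch⟩⟩)
      fun i v hv => by
        simp only [Fin.snoc_castSucc, Fin.succ_castSucc,
          Function.update_of_ne (Fin.castSucc_lt_last i).ne] at hv ⊢
        exact ρ.step_rcv i v hv }

@[simp]
lemma lastLab_snoc (ρ : RExec P ν r) {s : ν} {m : M} {L : ν → Q} (h : P.Step ρ.lastLab s m L) :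
    (ρ.snoc h).lastLab = L := by
  simp [snoc, lastLab]

lemma activeLen_snoc (ρ : RExec P ν r) {s : ν} {m : M} {L : ν → Q} (h : P.Step ρ.lastLab s m L)
    (v : ν) : (ρ.snoc h).activeLen v = ρ.activeLen v + if v = s then 1 else 0 := by
  rw [activeLen, activeLen, Finset.card_filter, Finset.card_filter, Fin.sum_univ_castSucc]
  simp only [snoc, Fin.snoc_castSucc, Fin.snoc_last, eq_comm (a := s)]

def reindex {ν' : Type} [Fintype ν'] [DecidableEq ν'] (e : ν ≃ ν') (ρ : RExec P ν r) :
    RExec P ν' r where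
  lab i v := ρ.lab i (e.symm v)
  edges i a b := ρ.edges i (e.symm a) (e.symm b)
  edges_symm i _ _ h := ρ.edges_symm i h
  edges_irrefl i _ h := ρ.edges_irrefl i _ h
  sender i := e (ρ.sender i)
  msg := ρ.msg
  init _ := ρ.init _
  step_br i := by simpa using ρ.step_br i
  step_rcv i v hv := by
    simpa using ρ.step_rcv i (e.symm v) (by rwa [ne_eq, Equiv.symm_apply_eq])

@[simp]
lemma lastLab_reindex {ν' : Type} [Fintype ν'] [DecidableEq ν'] (e : ν ≃ ν') (ρ : RExec P ν r)
    (v : ν') : (ρ.reindex e).lastLab v = ρ.lastLab (e.symm v) := rfl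

@[simp]
lemma activeLen_reindex {ν' : Type} [Fintype ν'] [DecidableEq ν'] (e : ν ≃ ν')
    (ρ : RExec P ν r) (v : ν') : (ρ.reindex e).activeLen v = ρ.activeLen (e.symm v) := by
  simp only [activeLen, reindex, ← Equiv.eq_symm_apply]

lemma sum_activeLen (ρ : RExec P ν r) : ∑ v, ρ.activeLen v = r := by
  simpa [activeLen] using (Finset.card_eq_sum_card_fiberwise
    (f := ρ.sender) (s := Finset.univ) (t := Finset.univ) fun _ _ => Finset.mem_univ _).symm

lemma length_le_card_mul (ρ : RExec P ν r) {T : ℕ} (h : ∀ v, ρ.activeLen v ≤ T) :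
    r ≤ Fintype.card ν * T := by
  rw [← ρ.sum_activeLen, ← smul_eq_mul, ← Finset.card_univ, ← Finset.sum_const]
  exact Finset.sum_le_sum fun v _ => h v

end RExec

namespace BroadcastProtocol.Reaches

variable {Q M : Type} [Fintype Q] [DecidableEq Q] [Fintype M] {P : BroadcastProtocol Q M}
  {ν : Type} [Fintype ν] [DecidableEq ν] {L L' : ν → Q} {c : ν → ℕ}

lemma of_initial (hL : ∀ v, L v ∈ P.I) : P.Reaches L 0 :=
  ⟨0, RExec.idle L hL, rfl, by ext v; simp [RExec.activeLen]⟩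

lemma step (h : P.Reaches L c) {s : ν} {m : M} (hs : P.Step L s m L') :
    P.Reaches L' fun v => c v + if v = s then 1 else 0 := by
  obtain ⟨r, ρ, rfl, rfl⟩ := h
  exact ⟨r + 1, ρ.snoc hs, ρ.lastLab_snoc hs, funext (ρ.activeLen_snoc hs)⟩

lemma round (h : P.Reaches L c) (S : Finset ν) (g : ν → ν)
    (hsend : ∀ s ∈ S, ∃ m, P.br (L s) m (L' s) ∧
      ∀ v ∉ S, g v = s → L' v = L v ∨ P.rcv (L v) m (L' v))
    (hidle : ∀ v ∉ S, g v ∉ S → L' v = L v) :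
    P.Reaches L' fun v => c v + if v ∈ S then 1 else 0 := by
  classical
  let mid (T : Finset ν) (v : ν) : Q := if v ∈ T ∨ v ∉ S ∧ g v ∈ T then L' v else L v
  suffices ∀ T ⊆ S, P.Reaches (mid T) fun v => c v + if v ∈ T then 1 else 0 by
    convert this S subset_rfl using 1
    funext v
    by_cases hv : v ∈ S
    · simp [mid, hv]
    · by_cases hg : g v ∈ S <;> simp [mid, hv, hg, hidle]
  intro T
  induction T using Finset.induction_on with
  | empty => intro _; simpa [mid] using h
  | insert s T hsT ih =>
    intro hsub
    have hs : s ∈ S := hsub (Finset.mem_insert_self s T)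
    obtain ⟨m, hbr, hrcv⟩ := hsend s hs
    have hstep : P.Step (mid T) s m (mid (insert s T)) := by
      refine ⟨by simpa [mid, hsT, hs] using hbr, fun v hvs => ?_⟩
      by_cases hvS : v ∈ S
      · simp [mid, hvS, hvs]
      · by_cases hgv : g v = s
        · have hvT : v ∉ T := fun hvT => hvS (hsub (Finset.mem_insert_of_mem hvT))
          simpa [mid, hvS, hgv, hsT, hvT] using hrcv v hvS hgv
        · simp [mid, hvS, hvs, hgv]
    convert (ih ((Finset.subset_insert s T).trans hsub)).step hstep using 1
    funext v
    by_cases hv : v = s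
    · simp [hv, hsT]
    · simp [hv]

end BroadcastProtocol.Reaches

namespace LevelledCover

variable {Q M : Type} [Fintype Q] [DecidableEq Q] [Fintype M] {P : BroadcastProtocol Q M}
  (δ : LevelledCover P)

def back (n : ℕ) (q : Q) : Q := if δ.level q = n + 1 then δ.prem q else q

/-- Labellings reached after `n` rounds, on one main node `none` and one helper per state of
`recv`; the helper of `q` has done its job once `level q ≤ n`. -/
def Admissible (n : ℕ) (d : Option δ.recv → Q) : Prop :=
  (∀ x, d x ∈ δ.covered ∧ δ.level (d x) ≤ n) ∧
    ∀ q : δ.recv, δ.level q ≤ n → d (some q) = δ.emitted q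

def IsEmitterAt (n : ℕ) (x : Option δ.recv) : Prop := ∃ q : δ.recv, x = some q ∧ δ.level q = n + 1

def retreat (n : ℕ) (d : Option δ.recv → Q) : Option δ.recv → Q
  | some q => if δ.level q = n + 1 then δ.emitter q else δ.back n (d (some q))
  | none => δ.back n (d none)

def listenTo (n : ℕ) (d : Option δ.recv → Q) (x : Option δ.recv) : Option δ.recv :=
  if hx : d x ∈ δ.recv ∧ δ.level (d x) = n + 1 then some ⟨d x, hx.1⟩ else x

variable {δ} {n : ℕ} {d : Option δ.recv → Q}

lemma back_of_level_le {q : Q} (h : δ.level q ≤ n) : δ.back n q = q :=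
  if_neg (by omega)

lemma back_mem {q : Q} (hq : q ∈ δ.covered) (hn : δ.level q ≤ n + 1) :
    δ.back n q ∈ δ.covered ∧ δ.level (δ.back n q) ≤ n := by
  by_cases h : δ.level q = n + 1
  · have := δ.prem_mem q hq (by omega)
    simp only [back, if_pos h]
    exact ⟨this.1, by omega⟩
  · rw [back_of_level_le (by omega)]
    exact ⟨hq, by omega⟩

lemma retreat_some_of_level_eq {q : δ.recv} (h : δ.level q = n + 1) :
    δ.retreat n d (some q) = δ.emitter q :=
  if_pos h

lemma retreat_of_not_isEmitterAt {x : Option δ.recv} (hx : ¬ δ.IsEmitterAt n x) :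
    δ.retreat n d x = δ.back n (d x) := by
  rcases x with _ | q
  · rfl
  · exact if_neg fun h => hx ⟨q, rfl, h⟩

lemma isEmitterAt_listenTo {x : Option δ.recv} (hx : δ.listenTo n d x ≠ x) :
    δ.IsEmitterAt n (δ.listenTo n d x) ∧ ∃ q : δ.recv, δ.listenTo n d x = some q ∧ d x = q := by
  simp only [listenTo] at hx ⊢
  split_ifs at hx ⊢ with hc
  · exact ⟨⟨_, rfl, hc.2⟩, _, rfl, rfl⟩
  · exact absurd rfl hx

lemma Admissible.retreat (hd : δ.Admissible (n + 1) d) : δ.Admissible n (δ.retreat n d) := by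
  refine ⟨fun x => ?_, fun q hq => ?_⟩
  · by_cases hx : δ.IsEmitterAt n x
    · obtain ⟨q, rfl, hq⟩ := hx
      rw [retreat_some_of_level_eq hq]
      have := δ.emitter_mem q q.2
      exact ⟨this.1, by omega⟩
    · rw [retreat_of_not_isEmitterAt hx]
      exact back_mem (hd.1 x).1 (hd.1 x).2
  · rw [retreat_of_not_isEmitterAt (by rintro ⟨q', hq', h⟩; cases hq'; omega), hd.2 q (by omega)]
    exact back_of_level_le ((δ.emitted_mem q q.2).2.trans hq)

/-- Round `n + 1`: the helpers of the `recv` states of level `n + 1` broadcast, the nodes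
moving to such a state receive from the corresponding helper, and the nodes moving to another
state of level `n + 1` broadcast by themselves. -/
lemma Admissible.reaches_of_reaches_retreat (hd : δ.Admissible (n + 1) d) {c : Option δ.recv → ℕ}
    (h : P.Reaches (δ.retreat n d) c) :
    ∃ c', P.Reaches d c' ∧ ∀ x, c' x ≤ c x + 1 := by
  classical
  let S := Finset.univ.filter fun x =>
    δ.IsEmitterAt n x ∨ ¬ δ.IsEmitterAt n x ∧ δ.level (d x) = n + 1 ∧ d x ∉ δ.recv
  let g := δ.listenTo n d
  have hS {x : Option δ.recv} (hx : x ∉ S) : ¬ δ.IsEmitterAt n x ∧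
      (δ.level (d x) = n + 1 → d x ∈ δ.recv) := by
    simp only [S, Finset.mem_filter, Finset.mem_univ, true_and, not_or, not_and, not_not] at hx
    exact ⟨hx.1, hx.2 hx.1⟩
  refine ⟨_, h.round S g (fun s hs => ?_) (fun v hv hgv => ?_), fun x => by split <;> omega⟩
  · have hmoved {v : Option δ.recv} (hv : v ∉ S) (hgv : g v = s) : g v ≠ v :=
      fun h => hv (h ▸ hgv ▸ hs)
    rcases (Finset.mem_filter.mp hs).2 with ⟨q, rfl, hq⟩ | ⟨hns, hlev, hnrecv⟩
    · obtain ⟨m, hrcv, hbr⟩ := δ.rcv_prem_br_emitter q q.2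
      refine ⟨m, ?_, fun v hv hgv => Or.inr ?_⟩
      · rw [retreat_some_of_level_eq hq, hd.2 q hq.le]
        exact hbr
      · obtain ⟨-, q', hq', hdv⟩ := isEmitterAt_listenTo (hmoved hv hgv)
        obtain rfl : q' = q := Option.some_injective _ (hq'.symm.trans hgv)
        rw [retreat_of_not_isEmitterAt (hS hv).1, hdv, back, if_pos hq]
        exact hrcv
    · obtain ⟨m, hbr⟩ := δ.br_prem (d s) (hd.1 s).1 (by omega) hnrecv
      refine ⟨m, ?_, fun v hv hgv => absurd ?_ hns⟩
      · rw [retreat_of_not_isEmitterAt hns, back, if_pos hlev]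
        exact hbr
      · exact hgv ▸ (isEmitterAt_listenTo (hmoved hv hgv)).1
  · obtain ⟨hne, hrecv⟩ := hS hv
    rw [retreat_of_not_isEmitterAt hne, back_of_level_le]
    refine Nat.le_of_lt_succ (lt_of_le_of_ne (hd.1 v).2 fun hlev => hgv ?_)
    have hc : d v ∈ δ.recv ∧ δ.level (d v) = n + 1 := ⟨hrecv hlev, hlev⟩
    simp only [g, listenTo, dif_pos hc]
    exact Finset.mem_filter.mpr ⟨Finset.mem_univ _, Or.inl ⟨_, rfl, hlev⟩⟩

theorem Admissible.exists_reaches (hd : δ.Admissible n d) :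
    ∃ c, P.Reaches d c ∧ ∀ x, c x ≤ n := by
  induction n generalizing d with
  | zero =>
    refine ⟨0, .of_initial fun x => ?_, fun _ => le_rfl⟩
    exact δ.mem_I_of_level_eq_zero _ (hd.1 x).1 (Nat.le_zero.mp (hd.1 x).2)
  | succ n ih =>
    obtain ⟨c, hc, hcn⟩ := ih hd.retreat
    obtain ⟨c', hc', hcc'⟩ := hd.reaches_of_reaches_retreat hc
    exact ⟨c', hc', fun x => (hcc' x).trans (Nat.succ_le_succ (hcn x))⟩

lemma admissible_target {f : Q} (hf : f ∈ δ.covered) (hlev : ∀ q ∈ δ.covered, δ.level q ≤ n) :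
    δ.Admissible n fun x => x.elim f fun q => δ.emitted q := by
  refine ⟨fun x => ?_, fun q _ => rfl⟩
  rcases x with _ | ⟨q, hq⟩
  · exact ⟨hf, hlev f hf⟩
  · have := δ.emitted_mem q hq
    exact ⟨this.1, this.2.trans (hlev q (δ.recv_subset q hq).1)⟩

lemma card_node_le : Fintype.card (Option δ.recv) ≤ Fintype.card Q - P.I.card + 1 := by
  rw [Fintype.card_option, Fintype.card_coe, ← Finset.card_compl]
  exact Nat.succ_le_succ
    (Finset.card_le_card fun q hq => Finset.mem_compl.mpr (δ.recv_subset q hq).2)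

end LevelledCover

/-- **Refined upper bounds for reconfigurable networks.** If some reconfigurable
execution of `P` covers `F`, then there is a reconfigurable execution covering `F`
with at most `2|Q| - |I|` nodes, in which every node broadcasts at most `|Q| - |I|`
times, and consequently of length at most `(2|Q| - |I|)·(|Q| - |I|)`. -/
theorem refined_upper_bounds_reconfigurable
    {Q M : Type} [Fintype Q] [DecidableEq Q] [Fintype M] (P : BroadcastProtocol Q M)
    (F : Set Q) (ν : Type) [Fintype ν] [DecidableEq ν]
    (r₀ : ℕ) (ρ₀ : RExec P ν r₀) (h : ρ₀.Covers F) :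
    ∃ (k r : ℕ) (ρ : RExec P (Fin k) r), ρ.Covers F ∧
      k ≤ 2 * Fintype.card Q - P.I.card ∧
      (∀ v, ρ.activeLen v ≤ Fintype.card Q - P.I.card) ∧
      r ≤ (2 * Fintype.card Q - P.I.card) * (Fintype.card Q - P.I.card) := by
  obtain ⟨v₀, hv₀⟩ := h
  obtain ⟨δ, hcov, hlev⟩ := LevelledCover.exists_covLevel_subset_covered P
  have hf : ρ₀.lastLab v₀ ∈ δ.covered := hcov _ (ρ₀.lab_mem_covLevel _ v₀)
  obtain ⟨c, ⟨r, ρ, hlast, rfl⟩, hc⟩ := (δ.admissible_target hf hlev).exists_reaches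
  let e := Fintype.equivFin (Option δ.recv)
  have hk : Fintype.card (Option δ.recv) ≤ 2 * Fintype.card Q - P.I.card := by
    have := δ.card_node_le
    have := Finset.card_le_univ P.I
    have := Fintype.card_pos_iff.mpr ⟨ρ₀.lastLab v₀⟩
    omega
  refine ⟨_, r, ρ.reindex e, ⟨e none, ?_⟩, hk, fun v => ?_, ?_⟩
  · simpa [hlast] using hv₀
  · simpa using hc (e.symm v)
  · exact ((ρ.reindex e).length_le_card_mul fun v => by simpa using hc (e.symm v)).trans
      (by simpa using Nat.mul_le_mul_right _ hk)
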